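/- Assume d ≥ p(J) and α_j > 0, β_j > 0 for all j ∈ J. Let X* = (e, t, δ, x) ∈ P¹ with δ ∈ {0,1}^J. If X* is an extreme point of P¹ and g_{α,β}(e,t) ≤ g_{α,β}(e',t') for every (e',t',δ',x') ∈ P¹ with δ' ∈ {0,1}^J, then the schedule C* defined by C*_j = d − e_j + t_j is a d-block, i.e. a feasible schedule without idle time (max_j C*_j − min_j (C*_j − p_j) = p(J)) containing an on-time task (some j with C*_j = d). -/

import Mathlib

/-!
With `δ` integral the linearization variables are forced, and `P¹` splits into two independent
polyhedra: the early offsets `e` on `E = {δ = 1}`, subject to `∑_{S} p e ≥ g_p(S) - ∑_{S} p²`,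
and the tardy offsets `t` on `T = {δ = 0}`, subject to `∑_{S} p t ≥ g_p(S)`, each inside a box.
Both right-hand sides are strictly supermodular, so on each side the tight sets form a chain.
Minimality of the cost (`α, β > 0`) puts every task in a tight set, and extremality rules out two
tasks that no tight set separates, since weight could be shifted between them in both directions.
Hence the chain of tight sets grows one task at a time, which pins `e_j` (resp. `t_j`) to the
processing time of the tasks before (resp. up to and including) `j` in the chain: the early tasks
are packed without gaps before `d`, the tardy ones after `d`. Finally `E` is nonempty, since
otherwise making one tardy task on time would lower the cost.
-/

/-- `g_p(S) = ½(∑_{j∈S} p_j)² + ½ ∑_{j∈S} p_j²`. -/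
noncomputable def gp {J : Type*} (p : J → ℝ) (S : Finset J) : ℝ :=
  (∑ j ∈ S, p j) ^ 2 / 2 + (∑ j ∈ S, (p j) ^ 2) / 2

/-- Sum over the ordered pairs `S^< = {(i,j) ∈ S² : i < j}`. -/
def pairSum {J : Type*} [LinearOrder J] (S : Finset J) (f : J → J → ℝ) : ℝ :=
  ∑ i ∈ S, ∑ j ∈ S.filter (fun j => i < j), f i j

/-- Membership in the polyhedron `P¹`: the constraints (e0–t1) on `e,t`,
`δ ∈ [0,1]^J`, the linearization constraints (x1–x4), and the non-overlapping
inequalities (S1) and (S2). -/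
def memP1 {J : Type*} [Fintype J] [LinearOrder J]
    (p : J → ℝ) (e t δ : J → ℝ) (x : J → J → ℝ) : Prop :=
  (∀ j, 0 ≤ δ j ∧ δ j ≤ 1) ∧
  (∀ j, 0 ≤ e j) ∧ (∀ j, e j ≤ δ j * ((∑ k, p k) - p j)) ∧
  (∀ j, 0 ≤ t j) ∧ (∀ j, t j ≤ (1 - δ j) * (∑ k, p k)) ∧
  (∀ i j : J, i < j →
    x i j ≥ δ i - δ j ∧ x i j ≥ δ j - δ i ∧
    x i j ≤ δ i + δ j ∧ x i j ≤ 2 - (δ i + δ j)) ∧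
  (∀ S : Finset J,
    ∑ i ∈ S, p i * e i ≥ pairSum S (fun i j => p i * p j * (δ i + δ j - x i j) / 2)) ∧
  (∀ S : Finset J,
    ∑ i ∈ S, p i * t i ≥
      pairSum S (fun i j => p i * p j * (2 - (δ i + δ j) - x i j) / 2)
        + ∑ i ∈ S, (p i) ^ 2 * (1 - δ i))

open Finset

/-- A feasible schedule: positivity and non-overlapping. -/
def Feasible {J : Type*} (p C : J → ℝ) : Prop :=
  (∀ j, p j ≤ C j) ∧ ∀ i j : J, i ≠ j → C j ≥ C i + p j ∨ C i ≥ C j + p i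

/-- A block: a feasible schedule without idle time. -/
def IsBlock {J : Type*} [Fintype J] [Nonempty J] (p C : J → ℝ) : Prop :=
  Feasible p C ∧
    (univ.sup' univ_nonempty C - univ.inf' univ_nonempty (fun j => C j - p j)) = ∑ j, p j

/-- `X = (e,t,δ,x)` is an extreme point of `P¹`: it belongs to `P¹` and is not the
midpoint of two distinct points of `P¹` (the `x` coordinates are only meaningful on
the pairs `i < j`). -/
def isExtremeP1 {J : Type*} [Fintype J] [LinearOrder J]
    (p : J → ℝ) (e t δ : J → ℝ) (x : J → J → ℝ) : Prop :=
  memP1 p e t δ x ∧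
  ∀ e₁ t₁ δ₁ x₁ e₂ t₂ δ₂ x₂, memP1 p e₁ t₁ δ₁ x₁ → memP1 p e₂ t₂ δ₂ x₂ →
    (∀ j, e j = (e₁ j + e₂ j) / 2) → (∀ j, t j = (t₁ j + t₂ j) / 2) →
    (∀ j, δ j = (δ₁ j + δ₂ j) / 2) →
    (∀ i j : J, i < j → x i j = (x₁ i j + x₂ i j) / 2) →
    (e₁ = e₂ ∧ t₁ = t₂ ∧ δ₁ = δ₂ ∧ ∀ i j : J, i < j → x₁ i j = x₂ i j)

open Filter Topology

section SetFunctions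

variable {J : Type*}

def StrictSupermodular [DecidableEq J] (f : Finset J → ℝ) : Prop :=
  ∀ A B, ¬A ⊆ B → ¬B ⊆ A → f A + f B < f (A ∪ B) + f (A ∩ B)

variable (p : J → ℝ) (f : Finset J → ℝ) (V : Finset J) (U y : J → ℝ)

def Dominates : Prop := ∀ S ⊆ V, f S ≤ ∑ i ∈ S, p i * y i

def IsTight (S : Finset J) : Prop := S ⊆ V ∧ ∑ i ∈ S, p i * y i = f S

def IsJumpSet [DecidableEq J] (j : J) (A : Finset J) : Prop :=
  IsTight p f V y A ∧ j ∈ A ∧ IsTight p f V y (A.erase j)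

def Admissible : Prop :=
  (∀ j ∉ V, y j = 0) ∧ (∀ j ∈ V, y j ≤ U j) ∧ Dominates p f V y

/-- Each task `j ∈ V` occupies `[a j, a j + p j] ⊆ [0, p(V)]`, and both ends are reached. -/
def IsPacking (a : J → ℝ) : Prop :=
  (∀ j ∈ V, 0 ≤ a j ∧ a j + p j ≤ ∑ i ∈ V, p i) ∧
  (∀ i ∈ V, ∀ j ∈ V, i ≠ j → a i + p i ≤ a j ∨ a j + p j ≤ a i) ∧
  (V.Nonempty → (∃ j ∈ V, a j = 0) ∧ ∃ j ∈ V, a j + p j = ∑ i ∈ V, p i)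

variable {p f V U y}

lemma IsPacking.congr {a b : J → ℝ} (h : IsPacking p V a) (hab : ∀ j ∈ V, a j = b j) :
    IsPacking p V b := by
  obtain ⟨h₁, h₂, h₃⟩ := h
  refine ⟨fun j hj => hab j hj ▸ h₁ j hj,
    fun i hi j hj hij => hab i hi ▸ hab j hj ▸ h₂ i hi j hj hij, fun hV => ?_⟩
  obtain ⟨⟨j, hj, hj0⟩, ⟨k, hk, hkV⟩⟩ := h₃ hV
  exact ⟨⟨j, hj, hab j hj ▸ hj0⟩, ⟨k, hk, hab k hk ▸ hkV⟩⟩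

lemma eventually_nonneg_add_mul {c₀ c₁ : ℝ} (h₀ : 0 ≤ c₀) (h₁ : c₀ = 0 → 0 ≤ c₁) :
    ∀ᶠ η in 𝓝[>] (0 : ℝ), 0 ≤ c₀ + η * c₁ := by
  rcases h₀.lt_or_eq with h₀ | h₀
  · have hcont : Continuous fun η : ℝ => c₀ + η * c₁ := by fun_prop
    have := (hcont.tendsto 0).eventually (lt_mem_nhds (by simpa using h₀))
    exact nhdsWithin_le_nhds (this.mono fun η h => h.le)
  · filter_upwards [self_mem_nhdsWithin] with η hη
    rw [← h₀]
    exact add_nonneg le_rfl (mul_nonneg (le_of_lt hη) (h₁ h₀.symm))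

lemma Admissible.eventually_add_smul (hy : Admissible p f V U y) {v : J → ℝ}
    (hvV : ∀ j ∉ V, v j = 0) (hvU : ∀ j ∈ V, 0 < v j → y j < U j)
    (hvT : ∀ S, IsTight p f V y S → 0 ≤ ∑ i ∈ S, p i * v i) :
    ∀ᶠ η in 𝓝[>] (0 : ℝ), Admissible p f V U (y + η • v) := by
  obtain ⟨hy0, hyU, hyD⟩ := hy
  have hbox : ∀ᶠ η in 𝓝[>] (0 : ℝ), ∀ j ∈ V, 0 ≤ (U j - y j) + η * -v j :=
    (eventually_all_finset V).2 fun j hj => eventually_nonneg_add_mul (by linarith [hyU j hj])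
      fun h => by linarith [not_lt.1 fun hv => (hvU j hj hv).ne (by linarith)]
  have hdom : ∀ᶠ η in 𝓝[>] (0 : ℝ), ∀ S ∈ V.powerset,
      0 ≤ (∑ i ∈ S, p i * y i - f S) + η * ∑ i ∈ S, p i * v i :=
    (eventually_all_finset _).2 fun S hS => eventually_nonneg_add_mul
      (by linarith [hyD S (mem_powerset.1 hS)])
      fun h => hvT S ⟨mem_powerset.1 hS, by linarith⟩
  filter_upwards [hbox, hdom] with η hbox hdom
  refine ⟨fun j hj => by simp [hy0 j hj, hvV j hj], fun j hj => ?_, fun S hS => ?_⟩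
  · simp only [Pi.add_apply, Pi.smul_apply, smul_eq_mul]
    linarith [hbox j hj]
  · have := hdom S (mem_powerset.2 hS)
    simp only [Pi.add_apply, Pi.smul_apply, smul_eq_mul, mul_add, sum_add_distrib]
    have hlin : ∑ i ∈ S, p i * (η * v i) = η * ∑ i ∈ S, p i * v i := by
      rw [mul_sum]
      exact sum_congr rfl fun i _ => by ring
    linarith

end SetFunctions

section TightSets

variable {J : Type*} [DecidableEq J] {p : J → ℝ} {f : Finset J → ℝ} {V : Finset J} {U y : J → ℝ}

lemma StrictSupermodular.sub_sum (hf : StrictSupermodular f) (g : J → ℝ) :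
    StrictSupermodular fun S => f S - ∑ i ∈ S, g i := by
  intro A B hAB hBA
  have := sum_union_inter (s₁ := A) (s₂ := B) (f := g)
  linarith [hf A B hAB hBA]

lemma IsTight.subset_or_subset (hf : StrictSupermodular f) (hy : Dominates p f V y)
    {A B : Finset J} (hA : IsTight p f V y A) (hB : IsTight p f V y B) : A ⊆ B ∨ B ⊆ A := by
  by_contra! h
  have hU := hy _ (union_subset hA.1 hB.1)
  have hI := hy (A ∩ B) (inter_subset_left.trans hA.1)
  have := sum_union_inter (s₁ := A) (s₂ := B) (f := fun i => p i * y i)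
  linarith [hf A B h.1 h.2, hA.2, hB.2]

lemma IsTight.mul_lt_sub_erase (hy : Dominates p f V y) {A : Finset J} (hA : IsTight p f V y A)
    {j : J} (hj : j ∈ A) (hne : ¬IsTight p f V y (A.erase j)) :
    p j * y j < f A - f (A.erase j) := by
  have hsub : A.erase j ⊆ V := (A.erase_subset j).trans hA.1
  have hlt : f (A.erase j) < ∑ i ∈ A.erase j, p i * y i :=
    (hy _ hsub).lt_of_ne fun h => hne ⟨hsub, h.symm⟩
  have := add_sum_erase A (fun i => p i * y i) hj
  linarith [hA.2]

lemma IsJumpSet.mul_eq {j : J} {A : Finset J} (h : IsJumpSet p f V y j A) :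
    p j * y j = f A - f (A.erase j) := by
  have := add_sum_erase A (fun i => p i * y i) h.2.1
  linarith [h.1.2, h.2.2.2]

lemma exists_least_isTight (hf : StrictSupermodular f) (hy : Dominates p f V y)
    {P : Finset J → Prop} (hP : ∃ S, IsTight p f V y S ∧ P S) :
    ∃ A, IsTight p f V y A ∧ P A ∧ ∀ S, IsTight p f V y S → P S → A ⊆ S := by
  classical
  obtain ⟨S₀, hS₀⟩ := hP
  obtain ⟨A, hA, hAmin⟩ := (V.powerset.filter fun S => IsTight p f V y S ∧ P S).exists_minimal
    ⟨S₀, by simpa [hS₀.1.1] using hS₀⟩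
  simp only [mem_filter, mem_powerset] at hA hAmin
  refine ⟨A, hA.2.1, hA.2.2, fun S hS hPS => ?_⟩
  rcases hA.2.1.subset_or_subset hf hy hS with h | h
  · exact h
  · exact hAmin ⟨hS.1, hS, hPS⟩ h

lemma exists_greatest_isTight (hf : StrictSupermodular f) (hy : Dominates p f V y)
    {P : Finset J → Prop} (hP : ∃ S, IsTight p f V y S ∧ P S) :
    ∃ A, IsTight p f V y A ∧ P A ∧ ∀ S, IsTight p f V y S → P S → S ⊆ A := by
  classical
  obtain ⟨S₀, hS₀⟩ := hP
  obtain ⟨A, hA, hAmax⟩ := (V.powerset.filter fun S => IsTight p f V y S ∧ P S).exists_maximal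
    ⟨S₀, by simpa [hS₀.1.1] using hS₀⟩
  simp only [mem_filter, mem_powerset] at hA hAmax
  refine ⟨A, hA.2.1, hA.2.2, fun S hS hPS => ?_⟩
  rcases hA.2.1.subset_or_subset hf hy hS with h | h
  · exact hAmax ⟨hS.1, hS, hPS⟩ h
  · exact h

theorem exists_isJumpSet_of_separating (hf : StrictSupermodular f) (hf0 : f ∅ = 0)
    (hy : Dominates p f V y) (hcover : ∀ j ∈ V, ∃ S, IsTight p f V y S ∧ j ∈ S)
    (hsep : ∀ j ∈ V, ∀ k ∈ V, (∀ S, IsTight p f V y S → (j ∈ S ↔ k ∈ S)) → j = k)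
    {j : J} (hj : j ∈ V) : ∃ A, IsJumpSet p f V y j A := by
  obtain ⟨A, hA, hjA, hAmin⟩ := exists_least_isTight hf hy (hcover j hj)
  obtain ⟨B, hB, hjB, hBmax⟩ := exists_greatest_isTight (P := (j ∉ ·)) hf hy
    ⟨∅, ⟨empty_subset V, by simp [hf0]⟩, notMem_empty j⟩
  have hBA : B ⊆ A.erase j := by
    rcases hA.subset_or_subset hf hy hB with h | h
    · exact absurd (h hjA) hjB
    · exact subset_erase.2 ⟨h, hjB⟩
  refine ⟨A, hA, hjA, ?_⟩
  by_contra hne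
  obtain ⟨k, hkA, hkB⟩ := exists_of_ssubset (hBA.ssubset_of_ne (by rintro rfl; exact hne hB))
  obtain ⟨hkj, hk⟩ := mem_erase.1 hkA
  -- no tight set separates `j` from `k`: those containing `j` contain `A`, the others lie in `B`
  refine hkj (hsep k (hA.1 hk) j hj fun S hS => ⟨fun hkS => ?_, fun hjS => hAmin S hS hjS hk⟩)
  by_contra hjS
  exact hkB (hBmax S hS hjS hkS)

lemma IsJumpSet.subset_erase_or_subset (hf : StrictSupermodular f) (hy : Dominates p f V y)
    {j : J} {A S : Finset J} (hA : IsJumpSet p f V y j A) (hS : IsTight p f V y S) :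
    S ⊆ A.erase j ∨ A ⊆ S := by
  rcases hS.subset_or_subset hf hy hA.2.2 with h | h
  · exact Or.inl h
  by_cases hjS : j ∈ S
  · exact Or.inr (insert_erase hA.2.1 ▸ insert_subset hjS h)
  · rcases hS.subset_or_subset hf hy hA.1 with h' | h'
    · exact Or.inl fun i hi => mem_erase.2 ⟨ne_of_mem_of_not_mem hi hjS, h' hi⟩
    · exact absurd (h' hA.2.1) hjS

lemma IsJumpSet.subset_erase_or_subset_erase (hf : StrictSupermodular f)
    (hy : Dominates p f V y) {i j : J} {A B : Finset J} (hA : IsJumpSet p f V y i A)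
    (hB : IsJumpSet p f V y j B) (hij : i ≠ j) : A ⊆ B.erase j ∨ B ⊆ A.erase i := by
  rcases hB.subset_erase_or_subset hf hy hA.1 with h | hBA
  · exact Or.inl h
  rcases hA.subset_erase_or_subset hf hy hB.1 with h | hAB
  · exact Or.inr h
  rcases hB.subset_erase_or_subset hf hy hA.2.2 with h | h
  · exact absurd (h (mem_erase.2 ⟨hij.symm, hBA hB.2.1⟩)) (notMem_erase j B)
  · exact Or.inr h

theorem isPacking_of_isJumpSet (hp : ∀ j, 0 < p j) (hf : StrictSupermodular f)
    (hy : Dominates p f V y) {A : J → Finset J} (hA : ∀ j ∈ V, IsJumpSet p f V y j (A j)) :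
    IsPacking p V (fun j => ∑ i ∈ (A j).erase j, p i) := by
  have hmono {S R : Finset J} (h : S ⊆ R) : ∑ i ∈ S, p i ≤ ∑ i ∈ R, p i :=
    sum_le_sum_of_subset_of_nonneg h fun i _ _ => (hp i).le
  have hend {j : J} (hj : j ∈ V) : ∑ i ∈ (A j).erase j, p i + p j = ∑ i ∈ A j, p i := by
    rw [add_comm, add_sum_erase _ _ (hA j hj).2.1]
  have horder {i j : J} (hi : i ∈ V) (hj : j ∈ V) (hij : i ≠ j) :
      A i ⊆ (A j).erase j ∨ A j ⊆ (A i).erase i :=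
    (hA i hi).subset_erase_or_subset_erase hf hy (hA j hj) hij
  refine ⟨fun j hj => ⟨sum_nonneg fun i _ => (hp i).le, hend hj ▸ hmono (hA j hj).1.1⟩,
    fun i hi j hj hij => ?_, fun hV => ⟨?_, ?_⟩⟩
  · rcases horder hi hj hij with h | h
    · exact Or.inl (hend hi ▸ hmono h)
    · exact Or.inr (hend hj ▸ hmono h)
  · obtain ⟨j, hj, hmin⟩ := V.exists_min_image (fun j => ∑ i ∈ (A j).erase j, p i) hV
    refine ⟨j, hj, ?_⟩
    suffices (A j).erase j = ∅ by simp [this]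
    refine eq_empty_of_forall_notMem fun l hl => ?_
    obtain ⟨hlj, hlA⟩ := mem_erase.1 hl
    have hlV := (hA j hj).1.1 hlA
    rcases horder hlV hj hlj with h | h
    · linarith [hend hlV ▸ hmono h, hmin l hlV, hp l]
    · exact notMem_erase l _ (h hlA)
  · obtain ⟨j, hj, hmax⟩ := V.exists_max_image (fun j => ∑ i ∈ A j, p i) hV
    refine ⟨j, hj, le_antisymm (hend hj ▸ hmono (hA j hj).1.1) (hend hj ▸ hmono fun l hl => ?_)⟩
    by_cases hlj : l = j
    · exact hlj ▸ (hA j hj).2.1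
    rcases horder hl hj hlj with h | h
    · exact mem_of_mem_erase (h (hA l hl).2.1)
    · linarith [hmono h, hmax l hl, hp l, hend hl]

lemma Minimal.exists_isTight_mem (hmin : Minimal (Admissible p f V U) y) {j : J} (hj : j ∈ V) :
    ∃ S, IsTight p f V y S ∧ j ∈ S := by
  by_contra! hfree
  have hv : ∀ᶠ η in 𝓝[>] (0 : ℝ), Admissible p f V U (y + η • -Pi.single j 1) := by
    refine hmin.1.eventually_add_smul (fun l hl => ?_) (fun l _ hl => ?_) fun S hS => ?_
    · simp [(ne_of_mem_of_not_mem hj hl).symm]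
    · by_cases hlj : l = j <;> norm_num [hlj] at hl
    · refine (sum_eq_zero fun i hi => ?_).ge
      simp [ne_of_mem_of_not_mem hi (hfree S hS)]
  obtain ⟨η, hη, hpos⟩ := (hv.and self_mem_nhdsWithin).exists
  have hle : y + η • -Pi.single j 1 ≤ y := fun l => by
    by_cases hlj : l = j <;> simp [hlj, le_of_lt hpos]
  have : η ≤ 0 := by simpa using hmin.2 hη hle j
  exact not_le.2 hpos this

lemma Dominates.lt_of_forall_isTight_mem_iff (hp : ∀ j, 0 < p j)
    (hU : ∀ A ⊆ V, ∀ j ∈ A, f A - f (A.erase j) ≤ p j * U j) (hy : Dominates p f V y)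
    (hcover : ∀ j ∈ V, ∃ S, IsTight p f V y S ∧ j ∈ S) {j k : J} (hj : j ∈ V) (hjk : j ≠ k)
    (hsame : ∀ S, IsTight p f V y S → (j ∈ S ↔ k ∈ S)) : y j < U j := by
  obtain ⟨A, hA, hjA⟩ := hcover j hj
  have hne : ¬IsTight p f V y (A.erase j) := fun h =>
    notMem_erase j A ((hsame _ h).2 (mem_erase.2 ⟨hjk.symm, (hsame A hA).1 hjA⟩))
  exact lt_of_mul_lt_mul_left ((hA.mul_lt_sub_erase hy hjA hne).trans_le (hU A hA.1 j hjA))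
    (hp j).le

lemma Admissible.eq_of_forall_isTight_mem_iff (hp : ∀ j, 0 < p j)
    (hU : ∀ A ⊆ V, ∀ j ∈ A, f A - f (A.erase j) ≤ p j * U j) (hy : Admissible p f V U y)
    (hext : ∀ y₁ y₂, Admissible p f V U y₁ → Admissible p f V U y₂ →
      (∀ j, y j = (y₁ j + y₂ j) / 2) → y₁ = y₂)
    (hcover : ∀ j ∈ V, ∃ S, IsTight p f V y S ∧ j ∈ S) {j k : J} (hj : j ∈ V) (hk : k ∈ V)
    (hsame : ∀ S, IsTight p f V y S → (j ∈ S ↔ k ∈ S)) : j = k := by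
  by_contra hjk
  set v : J → ℝ := Pi.single j (p j)⁻¹ - Pi.single k (p k)⁻¹ with hv
  have hsum (S : Finset J) :
      ∑ i ∈ S, p i * v i = (if j ∈ S then 1 else 0) - (if k ∈ S then 1 else 0) := by
    simp [hv, Pi.single_apply, mul_sub, sum_sub_distrib, mul_ite, (hp j).ne', (hp k).ne']
  have hvj : v j = (p j)⁻¹ := by simp [hv, hjk]
  have hvk : v k = -(p k)⁻¹ := by simp [hv, Ne.symm hjk]
  have hv0 (l : J) (hlj : l ≠ j) (hlk : l ≠ k) : v l = 0 := by simp [hv, hlj, hlk]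
  have hvV (l : J) (hl : l ∉ V) : v l = 0 :=
    hv0 l (ne_of_mem_of_not_mem hj hl).symm (ne_of_mem_of_not_mem hk hl).symm
  have hvpos (l : J) (hl : 0 < v l) : l = j := by
    by_contra hlj
    by_cases hlk : l = k
    · rw [hlk, hvk] at hl
      linarith [inv_pos.2 (hp k)]
    · exact hl.ne' (hv0 l hlj hlk)
  have hvneg (l : J) (hl : 0 < -v l) : l = k := by
    by_contra hlk
    by_cases hlj : l = j
    · rw [hlj, hvj] at hl
      linarith [inv_pos.2 (hp j)]
    · exact hl.ne' (by rw [hv0 l hlj hlk, neg_zero])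
  have hyj := hy.2.2.lt_of_forall_isTight_mem_iff hp hU hcover hj hjk hsame
  have hyk := hy.2.2.lt_of_forall_isTight_mem_iff hp hU hcover hk (Ne.symm hjk)
    fun S hS => (hsame S hS).symm
  have hplus := hy.eventually_add_smul hvV (fun l _ hl => hvpos l hl ▸ hyj)
    fun S hS => by simp only [hsum, ← hsame S hS, sub_self, le_refl]
  have hminus := hy.eventually_add_smul (v := -v) (fun l hl => by simp [hvV l hl])
    (fun l _ hl => hvneg l hl ▸ hyk) fun S hS => by
      simp only [Pi.neg_apply, mul_neg, sum_neg_distrib, hsum, ← hsame S hS, sub_self, neg_zero,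
        le_refl]
  obtain ⟨η, ⟨hvplus, hvminus⟩, hη⟩ := ((hplus.and hminus).and self_mem_nhdsWithin).exists
  have := congrFun (hext _ _ hvplus hvminus fun l => by
    simp only [Pi.add_apply, Pi.smul_apply, Pi.neg_apply, smul_eq_mul]
    ring) j
  simp only [Pi.add_apply, Pi.smul_apply, Pi.neg_apply, smul_eq_mul, hvj] at this
  linarith [mul_pos hη (inv_pos.2 (hp j))]

theorem Minimal.exists_isJumpSet (hp : ∀ j, 0 < p j) (hf : StrictSupermodular f)
    (hf0 : f ∅ = 0) (hU : ∀ A ⊆ V, ∀ j ∈ A, f A - f (A.erase j) ≤ p j * U j)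
    (hmin : Minimal (Admissible p f V U) y)
    (hext : ∀ y₁ y₂, Admissible p f V U y₁ → Admissible p f V U y₂ →
      (∀ j, y j = (y₁ j + y₂ j) / 2) → y₁ = y₂) :
    ∃ A : J → Finset J, ∀ j ∈ V, IsJumpSet p f V y j (A j) := by
  have hcover (j : J) (hj : j ∈ V) := hmin.exists_isTight_mem hj
  have := fun j (hj : j ∈ V) => exists_isJumpSet_of_separating hf hf0 hmin.1.2.2 hcover
    (fun j hj k hk => hmin.1.eq_of_forall_isTight_mem_iff hp hU hext hcover hj hk) hj
  choose! A hA using this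
  exact ⟨A, hA⟩

theorem Minimal.isPacking (hp : ∀ j, 0 < p j) (hf : StrictSupermodular f) (hf0 : f ∅ = 0)
    (hmin : Minimal (Admissible p f V U) y)
    (hext : ∀ y₁ y₂, Admissible p f V U y₁ → Admissible p f V U y₂ →
      (∀ j, y j = (y₁ j + y₂ j) / 2) → y₁ = y₂) {c : ℝ}
    (hmarg : ∀ A ⊆ V, ∀ j ∈ A, f A - f (A.erase j) = p j * (∑ i ∈ A.erase j, p i + c * p j))
    (hU : ∀ A ⊆ V, ∀ j ∈ A, ∑ i ∈ A.erase j, p i + c * p j ≤ U j) :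
    IsPacking p V (fun j => y j - c * p j) := by
  have hU' (A : Finset J) (hA : A ⊆ V) (j : J) (hj : j ∈ A) : f A - f (A.erase j) ≤ p j * U j :=
    hmarg A hA j hj ▸ mul_le_mul_of_nonneg_left (hU A hA j hj) (hp j).le
  obtain ⟨A, hA⟩ := hmin.exists_isJumpSet hp hf hf0 hU' hext
  refine (isPacking_of_isJumpSet hp hf hmin.1.2.2 hA).congr fun j hj => ?_
  have := (hA j hj).mul_eq.trans (hmarg _ (hA j hj).1.1 j (hA j hj).2.1)
  linarith [mul_left_cancel₀ (hp j).ne' this]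

end TightSets

section QuadraticSetFunctions

variable {J : Type*} [DecidableEq J]

noncomputable def gpEarly (p : J → ℝ) (S : Finset J) : ℝ :=
  gp p S - ∑ i ∈ S, p i ^ 2

lemma gp_sub_gp_erase (p : J → ℝ) {A : Finset J} {j : J} (hj : j ∈ A) :
    gp p A - gp p (A.erase j) = p j * (∑ i ∈ A.erase j, p i + p j) := by
  simp only [gp, ← add_sum_erase A _ hj]
  ring

lemma gpEarly_sub_gpEarly_erase (p : J → ℝ) {A : Finset J} {j : J} (hj : j ∈ A) :
    gpEarly p A - gpEarly p (A.erase j) = p j * ∑ i ∈ A.erase j, p i := by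
  have := gp_sub_gp_erase p hj
  simp only [gpEarly, ← add_sum_erase A (fun i => p i ^ 2) hj] at this ⊢
  linarith

lemma strictSupermodular_gp {p : J → ℝ} (hp : ∀ j, 0 < p j) : StrictSupermodular (gp p) := by
  intro A B hAB hBA
  have hA := sum_inter_add_sum_sdiff A B p
  have hB := sum_inter_add_sum_sdiff B A p
  have hU := sum_union_inter (s₁ := A) (s₂ := B) (f := p)
  have hU2 := sum_union_inter (s₁ := A) (s₂ := B) (f := fun i => p i ^ 2)
  have hx : 0 < ∑ i ∈ A \ B, p i := sum_pos (fun i _ => hp i) (sdiff_nonempty.2 hAB)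
  have hy : 0 < ∑ i ∈ B \ A, p i := sum_pos (fun i _ => hp i) (sdiff_nonempty.2 hBA)
  rw [inter_comm B A] at hB
  have hU' : ∑ i ∈ A ∪ B, p i = ∑ i ∈ A ∩ B, p i + ∑ i ∈ A \ B, p i + ∑ i ∈ B \ A, p i := by
    linarith
  simp only [gp, hU', ← hA, ← hB]
  nlinarith [mul_pos hx hy]

lemma strictSupermodular_gpEarly {p : J → ℝ} (hp : ∀ j, 0 < p j) :
    StrictSupermodular (gpEarly p) :=
  (strictSupermodular_gp hp).sub_sum _

end QuadraticSetFunctions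

section PairSums

variable {J : Type*} [LinearOrder J]

lemma pairSum_congr {S : Finset J} {f g : J → J → ℝ}
    (h : ∀ i ∈ S, ∀ j ∈ S, i < j → f i j = g i j) : pairSum S f = pairSum S g :=
  sum_congr rfl fun i hi => sum_congr rfl fun j hj => by
    rw [mem_filter] at hj
    exact h i hi j hj.1 hj.2

lemma pairSum_filter (S : Finset J) (P : J → Prop) [DecidablePred P] (f : J → J → ℝ) :
    pairSum (S.filter P) f = pairSum S fun i j => if P i ∧ P j then f i j else 0 := by
  simp only [pairSum, sum_filter]
  refine sum_congr rfl fun i _ => ?_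
  split_ifs with hi
  · exact sum_congr rfl fun j _ => by split_ifs <;> simp_all
  · simp [hi]

lemma pairSum_insert_of_forall_lt {S : Finset J} {a : J} (ha : ∀ i ∈ S, i < a)
    (f : J → J → ℝ) : pairSum (insert a S) f = pairSum S f + ∑ i ∈ S, f i a := by
  have haS : a ∉ S := fun h => lt_irrefl a (ha a h)
  have htop : (insert a S).filter (a < ·) = ∅ :=
    filter_eq_empty_iff.2 fun i hi => not_lt.2 (by
      rcases mem_insert.1 hi with rfl | hi
      exacts [le_rfl, (ha i hi).le])
  simp only [pairSum, sum_insert haS, htop, sum_empty, zero_add, ← sum_add_distrib]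
  refine sum_congr rfl fun i hi => ?_
  rw [filter_insert, if_pos (ha i hi), sum_insert (fun h => haS (mem_filter.1 h).1), add_comm]

lemma pairSum_mul_self (p : J → ℝ) (S : Finset J) :
    pairSum S (fun i j => p i * p j) = gpEarly p S := by
  induction S using Finset.induction_on_max with
  | empty => simp [pairSum, gpEarly, gp]
  | insert a S ha ih =>
    have haS : a ∉ S := fun h => lt_irrefl a (ha a h)
    rw [pairSum_insert_of_forall_lt ha, ih]
    simp only [gpEarly, gp, sum_insert haS, ← sum_mul]
    ring

end PairSums

section Reduction

variable {J : Type*}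

lemma linearization_iff {a b z : ℝ} (ha : a = 0 ∨ a = 1) (hb : b = 0 ∨ b = 1) :
    (z ≥ a - b ∧ z ≥ b - a ∧ z ≤ a + b ∧ z ≤ 2 - (a + b)) ↔ z = a + b - 2 * (a * b) := by
  constructor
  · rintro ⟨h₁, h₂, h₃, h₄⟩
    rcases ha with rfl | rfl <;> rcases hb with rfl | rfl <;> linarith
  · rintro rfl
    rcases ha with rfl | rfl <;> rcases hb with rfl | rfl <;> norm_num

/-- One side of `P¹`: `b = δ` for the early side, `b = 1 - δ` for the tardy one. -/
lemma admissible_iff [DecidableEq J] {p : J → ℝ} (hp : ∀ j, 0 < p j) {f : Finset J → ℝ}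
    (hf : ∀ j, 0 ≤ f {j}) {b U y : J → ℝ} (hb : ∀ j, b j = 0 ∨ b j = 1) {V : Finset J}
    (hV : ∀ j, j ∈ V ↔ b j = 1) :
    ((∀ j, 0 ≤ y j) ∧ (∀ j, y j ≤ b j * U j) ∧
        ∀ S : Finset J, f (S.filter (· ∈ V)) ≤ ∑ i ∈ S, p i * y i) ↔
      Admissible p f V U y := by
  have hbV (j : J) (hj : j ∉ V) : b j = 0 := (hb j).resolve_right fun h => hj ((hV j).2 h)
  constructor
  · rintro ⟨hy0, hyU, hyS⟩
    refine ⟨fun j hj => ?_, fun j hj => ?_, fun S hS => ?_⟩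
    · have := hyU j
      rw [hbV j hj, zero_mul] at this
      exact le_antisymm this (hy0 j)
    · simpa [(hV j).1 hj] using hyU j
    · simpa [filter_true_of_mem hS] using hyS S
  · rintro ⟨hy0, hyU, hyD⟩
    refine ⟨fun j => ?_, fun j => ?_, fun S => ?_⟩
    · by_cases hj : j ∈ V
      · exact nonneg_of_mul_nonneg_right (by simpa using (hf j).trans (hyD {j} (by simpa)))
          (hp j)
      · exact (hy0 j hj).ge
    · by_cases hj : j ∈ V
      · simpa [(hV j).1 hj] using hyU j hj
      · simp [hy0 j hj, hbV j hj]
    · rw [← sum_filter_of_ne (p := (· ∈ V))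
        fun i _ h => by_contra fun hi => h (by simp [hy0 i hi])]
      exact hyD _ fun i hi => (mem_filter.1 hi).2

variable [Fintype J]

noncomputable def early (δ : J → ℝ) : Finset J := univ.filter (δ · = 1)

lemma mem_early {δ : J → ℝ} {j : J} : j ∈ early δ ↔ δ j = 1 := by simp [early]

variable [LinearOrder J] {p e t δ : J → ℝ} {x : J → J → ℝ}

lemma pairSum_early (hδ : ∀ j, δ j = 0 ∨ δ j = 1)
    (hx : ∀ i j, i < j → x i j = δ i + δ j - 2 * (δ i * δ j)) (S : Finset J) :
    pairSum S (fun i j => p i * p j * (δ i + δ j - x i j) / 2) =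
      gpEarly p (S.filter (· ∈ early δ)) := by
  rw [← pairSum_mul_self, pairSum_filter]
  refine pairSum_congr fun i _ j _ hij => ?_
  rw [hx i j hij]
  rcases hδ i with hi | hi <;> rcases hδ j with hj | hj <;> simp [mem_early, hi, hj]

lemma pairSum_tardy (hδ : ∀ j, δ j = 0 ∨ δ j = 1)
    (hx : ∀ i j, i < j → x i j = δ i + δ j - 2 * (δ i * δ j)) (S : Finset J) :
    pairSum S (fun i j => p i * p j * (2 - (δ i + δ j) - x i j) / 2) +
        ∑ i ∈ S, p i ^ 2 * (1 - δ i) = gp p (S.filter (· ∈ (early δ)ᶜ)) := by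
  have hpair : pairSum S (fun i j => p i * p j * (2 - (δ i + δ j) - x i j) / 2) =
      gpEarly p (S.filter (· ∈ (early δ)ᶜ)) := by
    rw [← pairSum_mul_self, pairSum_filter]
    refine pairSum_congr fun i _ j _ hij => ?_
    rw [hx i j hij]
    rcases hδ i with hi | hi <;> rcases hδ j with hj | hj <;> norm_num [mem_early, hi, hj]
  have hsq : ∑ i ∈ S, p i ^ 2 * (1 - δ i) = ∑ i ∈ S.filter (· ∈ (early δ)ᶜ), p i ^ 2 := by
    rw [sum_filter]
    refine sum_congr rfl fun i _ => ?_
    rcases hδ i with hi | hi <;> simp [mem_early, hi]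
  rw [hpair, hsq, gpEarly, sub_add_cancel]

theorem memP1_iff (hp : ∀ j, 0 < p j) (hδ : ∀ j, δ j = 0 ∨ δ j = 1) :
    memP1 p e t δ x ↔ (∀ i j, i < j → x i j = δ i + δ j - 2 * (δ i * δ j)) ∧
      Admissible p (gpEarly p) (early δ) (fun j => (∑ k, p k) - p j) e ∧
      Admissible p (gp p) (early δ)ᶜ (fun _ => ∑ k, p k) t := by
  have hE := admissible_iff (f := gpEarly p) (U := fun j => (∑ k, p k) - p j) (y := e) hp
    (fun j => by simp [gpEarly, gp]) hδ fun j => mem_early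
  have hT := admissible_iff (f := gp p) (U := fun _ => ∑ k, p k) (y := t) hp
    (fun j => by simp only [gp]; positivity) (b := fun j => 1 - δ j) (V := (early δ)ᶜ)
    (fun j => by rcases hδ j with h | h <;> simp [h]) fun j => by
      rcases hδ j with h | h <;> simp [mem_early, h]
  constructor
  · rintro ⟨-, he0, he1, ht0, ht1, hx, hS1, hS2⟩
    have hx' i j h := (linearization_iff (hδ i) (hδ j)).1 (hx i j h)
    refine ⟨hx', hE.1 ⟨he0, he1, fun S => ?_⟩, hT.1 ⟨ht0, ht1, fun S => ?_⟩⟩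
    · simpa [pairSum_early hδ hx'] using hS1 S
    · simpa [pairSum_tardy hδ hx'] using hS2 S
  · rintro ⟨hx, he, ht⟩
    obtain ⟨he0, he1, hS1⟩ := hE.2 he
    obtain ⟨ht0, ht1, hS2⟩ := hT.2 ht
    refine ⟨fun j => by rcases hδ j with h | h <;> simp [h], he0, he1, ht0, ht1,
      fun i j h => (linearization_iff (hδ i) (hδ j)).2 (hx i j h), fun S => ?_, fun S => ?_⟩
    · simpa [pairSum_early hδ hx] using hS1 S
    · simpa [pairSum_tardy hδ hx] using hS2 S

end Reduction

section Schedule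

variable {J : Type*} [Fintype J] {p e t δ α β : J → ℝ} {x : J → J → ℝ}

lemma le_of_le_of_sum_mul_le {w y y' : J → ℝ} (hw : ∀ j, 0 < w j) (hle : y' ≤ y)
    (h : ∑ j, w j * y j ≤ ∑ j, w j * y' j) : y ≤ y' := by
  intro j
  by_contra hj
  have : ∑ j, w j * y' j < ∑ j, w j * y j :=
    sum_lt_sum (fun i _ => mul_le_mul_of_nonneg_left (hle i) (hw i).le)
      ⟨j, mem_univ j, mul_lt_mul_of_pos_left (lt_of_not_ge hj) (hw j)⟩
  linarith

lemma sum_erase_le_sum_univ_sub [DecidableEq J] (hp : ∀ j, 0 < p j) (A : Finset J) (j : J) :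
    ∑ i ∈ A.erase j, p i ≤ (∑ k, p k) - p j := by
  rw [← sum_erase_eq_sub (mem_univ j)]
  exact sum_le_sum_of_subset_of_nonneg (erase_subset_erase j (subset_univ A))
    fun i _ _ => (hp i).le

variable [LinearOrder J]

theorem isPacking_early (hp : ∀ j, 0 < p j) (hα : ∀ j, 0 < α j)
    (hδ : ∀ j, δ j = 0 ∨ δ j = 1) (hext : isExtremeP1 p e t δ x)
    (hmin : ∀ (e' t' δ' : J → ℝ) (x' : J → J → ℝ),
      memP1 p e' t' δ' x' → (∀ j, δ' j = 0 ∨ δ' j = 1) →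
      (∑ j, (α j * e j + β j * t j)) ≤ ∑ j, (α j * e' j + β j * t' j)) :
    IsPacking p (early δ) e := by
  obtain ⟨hx, he, ht⟩ := (memP1_iff hp hδ).1 hext.1
  have hmem (e' : J → ℝ)
      (he' : Admissible p (gpEarly p) (early δ) (fun j => (∑ k, p k) - p j) e') :
      memP1 p e' t δ x := (memP1_iff hp hδ).2 ⟨hx, he', ht⟩
  have hmin' : Minimal (Admissible p (gpEarly p) (early δ) (fun j => (∑ k, p k) - p j)) e :=
    ⟨he, fun e' he' hle => le_of_le_of_sum_mul_le hα hle
      (by simpa [sum_add_distrib] using hmin e' t δ x (hmem e' he') hδ)⟩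
  simpa using hmin'.isPacking hp (strictSupermodular_gpEarly hp) (by simp [gpEarly, gp])
    (fun e₁ e₂ h₁ h₂ hmid => (hext.2 e₁ t δ x e₂ t δ x (hmem e₁ h₁) (hmem e₂ h₂) hmid
      (fun j => by ring) (fun j => by ring) fun i j _ => by ring).1)
    (c := 0) (fun A _ j hj => by simpa using gpEarly_sub_gpEarly_erase p hj)
    fun A _ j _ => by simpa using sum_erase_le_sum_univ_sub hp A j

theorem isPacking_tardy (hp : ∀ j, 0 < p j) (hβ : ∀ j, 0 < β j)
    (hδ : ∀ j, δ j = 0 ∨ δ j = 1) (hext : isExtremeP1 p e t δ x)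
    (hmin : ∀ (e' t' δ' : J → ℝ) (x' : J → J → ℝ),
      memP1 p e' t' δ' x' → (∀ j, δ' j = 0 ∨ δ' j = 1) →
      (∑ j, (α j * e j + β j * t j)) ≤ ∑ j, (α j * e' j + β j * t' j)) :
    IsPacking p (early δ)ᶜ (fun j => t j - p j) := by
  obtain ⟨hx, he, ht⟩ := (memP1_iff hp hδ).1 hext.1
  have hmem (t' : J → ℝ) (ht' : Admissible p (gp p) (early δ)ᶜ (fun _ => ∑ k, p k) t') :
      memP1 p e t' δ x := (memP1_iff hp hδ).2 ⟨hx, he, ht'⟩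
  have hmin' : Minimal (Admissible p (gp p) (early δ)ᶜ (fun _ => ∑ k, p k)) t :=
    ⟨ht, fun t' ht' hle => le_of_le_of_sum_mul_le hβ hle
      (by simpa [sum_add_distrib] using hmin e t' δ x (hmem t' ht') hδ)⟩
  simpa using hmin'.isPacking hp (strictSupermodular_gp hp) (by simp [gp])
    (fun t₁ t₂ h₁ h₂ hmid => (hext.2 e t₁ δ x e t₂ δ x (hmem t₁ h₁) (hmem t₂ h₂)
      (fun j => by ring) hmid (fun j => by ring) fun i j _ => by ring).2.1)
    (c := 1) (fun A _ j hj => by simpa using gp_sub_gp_erase p hj)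
    fun A _ j _ => by linarith [sum_erase_le_sum_univ_sub hp A j]

end Schedule

section Block

variable {J : Type*} [Fintype J] [DecidableEq J] {p a b C : J → ℝ} {E : Finset J} {d : ℝ}

lemma feasible_of_isPacking (hp : ∀ j, 0 ≤ p j) (ha : IsPacking p E a) (hb : IsPacking p Eᶜ b)
    (hd : ∑ j, p j ≤ d) (hCE : ∀ j ∈ E, C j = d - a j) (hCT : ∀ j ∉ E, C j = d + b j + p j) :
    Feasible p C := by
  have hEd : ∑ j ∈ E, p j ≤ d := by
    linarith [sum_add_sum_compl E p, sum_nonneg fun j (_ : j ∈ Eᶜ) => hp j]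
  have hd0 : 0 ≤ d := (sum_nonneg fun j _ => hp j).trans hd
  refine ⟨fun j => ?_, fun i j hij => ?_⟩
  · by_cases hj : j ∈ E
    · rw [hCE j hj]
      linarith [(ha.1 j hj).2]
    · rw [hCT j hj]
      linarith [(hb.1 j (mem_compl.2 hj)).1]
  by_cases hi : i ∈ E <;> by_cases hj : j ∈ E
  · rw [hCE i hi, hCE j hj]
    rcases ha.2.1 i hi j hj hij with h | h
    · right; linarith
    · left; linarith
  · rw [hCE i hi, hCT j hj]
    left; linarith [(ha.1 i hi).1, (hb.1 j (mem_compl.2 hj)).1]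
  · rw [hCT i hi, hCE j hj]
    right; linarith [(ha.1 j hj).1, (hb.1 i (mem_compl.2 hi)).1]
  · rw [hCT i hi, hCT j hj]
    rcases hb.2.1 i (mem_compl.2 hi) j (mem_compl.2 hj) hij with h | h
    · left; linarith
    · right; linarith

theorem isBlock_of_isPacking [Nonempty J] (hp : ∀ j, 0 ≤ p j) (ha : IsPacking p E a)
    (hb : IsPacking p Eᶜ b) (hE : E.Nonempty) (hd : ∑ j, p j ≤ d)
    (hCE : ∀ j ∈ E, C j = d - a j) (hCT : ∀ j ∉ E, C j = d + b j + p j) :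
    IsBlock p C ∧ ∃ j, C j = d := by
  obtain ⟨⟨j₀, hj₀, ha₀⟩, ⟨j₁, hj₁, ha₁⟩⟩ := ha.2.2 hE
  have hC₀ : C j₀ = d := by rw [hCE j₀ hj₀, ha₀, sub_zero]
  have hsup : univ.sup' univ_nonempty C = d + ∑ j ∈ Eᶜ, p j := by
    refine le_antisymm (sup'_le _ _ fun j _ => ?_) ?_
    · by_cases hj : j ∈ E
      · rw [hCE j hj]
        linarith [(ha.1 j hj).1, sum_nonneg fun j (_ : j ∈ Eᶜ) => hp j]
      · rw [hCT j hj]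
        linarith [(hb.1 j (mem_compl.2 hj)).2]
    · rcases Eᶜ.eq_empty_or_nonempty with hT | hT
      · rw [hT, sum_empty, add_zero, ← hC₀]
        exact le_sup' C (mem_univ j₀)
      · obtain ⟨k, hk, hbk⟩ := (hb.2.2 hT).2
        rw [← hbk, ← add_assoc, ← hCT k (mem_compl.1 hk)]
        exact le_sup' C (mem_univ k)
  have hinf : univ.inf' univ_nonempty (fun j => C j - p j) = d - ∑ j ∈ E, p j := by
    refine le_antisymm ?_ (le_inf' _ _ fun j _ => ?_)
    · refine (inf'_le _ (mem_univ j₁)).trans_eq ?_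
      rw [hCE j₁ hj₁, ← ha₁]
      ring
    · by_cases hj : j ∈ E
      · rw [hCE j hj]
        linarith [(ha.1 j hj).2]
      · rw [hCT j hj]
        linarith [(hb.1 j (mem_compl.2 hj)).1, sum_nonneg fun j (_ : j ∈ E) => hp j]
  refine ⟨⟨feasible_of_isPacking hp ha hb hd hCE hCT, ?_⟩, j₀, hC₀⟩
  rw [hsup, hinf, ← sum_add_sum_compl E p]
  ring

end Block

section EarlyNonempty

variable {J : Type*} [Fintype J] [LinearOrder J] {p e t δ α β : J → ℝ} {x : J → J → ℝ}

theorem early_nonempty [Nonempty J] (hp : ∀ j, 0 < p j) (hβ : ∀ j, 0 < β j)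
    (hδ : ∀ j, δ j = 0 ∨ δ j = 1) (hmem : memP1 p e t δ x)
    (hmin : ∀ (e' t' δ' : J → ℝ) (x' : J → J → ℝ),
      memP1 p e' t' δ' x' → (∀ j, δ' j = 0 ∨ δ' j = 1) →
      (∑ j, (α j * e j + β j * t j)) ≤ ∑ j, (α j * e' j + β j * t' j)) :
    (early δ).Nonempty := by
  obtain ⟨-, he, ht⟩ := (memP1_iff hp hδ).1 hmem
  by_contra hE
  rw [not_nonempty_iff_eq_empty] at hE
  obtain ⟨j₀⟩ := ‹Nonempty J›
  set δ' : J → ℝ := Pi.single j₀ 1 with hδ'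
  set t' : J → ℝ := Function.update t j₀ 0 with ht'
  have hδ'01 (j : J) : δ' j = 0 ∨ δ' j = 1 := by by_cases hj : j = j₀ <;> simp [hδ', hj]
  have hE' : early δ' = {j₀} := by ext j; by_cases hj : j = j₀ <;> simp [mem_early, hδ', hj]
  have htj₀ : p j₀ ≤ t j₀ := by
    have := ht.2.2 {j₀} (by simp [hE])
    simp only [gp, sum_singleton] at this
    nlinarith [hp j₀]
  have hmem' : memP1 p 0 t' δ' fun i j => δ' i + δ' j - 2 * (δ' i * δ' j) := by
    refine (memP1_iff hp hδ'01).2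
      ⟨fun _ _ _ => rfl, ⟨fun _ _ => rfl, fun j _ => ?_, fun S hS => ?_⟩,
      ⟨fun j hj => ?_, fun j hj => ?_, fun S hS => ?_⟩⟩
    · simpa using sum_erase_le_sum_univ_sub hp ∅ j
    · rw [hE'] at hS
      rcases subset_singleton_iff.1 hS with rfl | rfl <;> simp [gpEarly, gp]
    · rw [hE', notMem_compl, mem_singleton] at hj
      simp [ht', hj]
    · rw [hE', mem_compl, mem_singleton] at hj
      simpa [ht', hj] using ht.2.1 j (by simp [hE])
    · rw [hE'] at hS
      have hsame : ∑ i ∈ S, p i * t' i = ∑ i ∈ S, p i * t i :=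
        sum_congr rfl fun i hi => by simp [ht', show i ≠ j₀ from fun h => by simp_all]
      rw [hsame]
      exact ht.2.2 S (by simp [hE])
  have hlt : ∑ j, (α j * 0 + β j * t' j) < ∑ j, (α j * e j + β j * t j) := by
    refine sum_lt_sum (fun j _ => ?_) ⟨j₀, mem_univ j₀, ?_⟩
    · by_cases hj : j = j₀
      · subst hj
        simp only [ht', he.1 j (by simp [hE]), Function.update_self]
        linarith [mul_nonneg (hβ j).le ((hp j).le.trans htj₀)]
      · simp [ht', hj, he.1 j (by simp [hE])]
    · simpa [ht', he.1 j₀ (by simp [hE])] using mul_pos (hβ j₀) ((hp j₀).trans_le htj₀)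
  have := hmin _ _ _ _ hmem' hδ'01
  simp only [Pi.zero_apply] at this
  linarith

end EarlyNonempty

/-- in the unrestrictive case with positive penalties, an integer
extreme point of `P¹` minimizing `g_{α,β}` over the integer points of `P¹` encodes a
`d`-block: a feasible schedule without idle time having an on-time task. -/
theorem stmt_14 {J : Type*} [Fintype J] [LinearOrder J] [Nonempty J]
    (p : J → ℝ) (hp : ∀ j, 0 < p j)
    (d : ℝ) (hd : (∑ j, p j) ≤ d)
    (α β : J → ℝ) (hα : ∀ j, 0 < α j) (hβ : ∀ j, 0 < β j)
    (e t δ : J → ℝ) (x : J → J → ℝ)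
    (hδ01 : ∀ j, δ j = 0 ∨ δ j = 1)
    (hext : isExtremeP1 p e t δ x)
    (hmin : ∀ (e' t' δ' : J → ℝ) (x' : J → J → ℝ),
      memP1 p e' t' δ' x' → (∀ j, δ' j = 0 ∨ δ' j = 1) →
      (∑ j, (α j * e j + β j * t j)) ≤ ∑ j, (α j * e' j + β j * t' j)) :
    IsBlock p (fun j => d - e j + t j) ∧ ∃ j, d - e j + t j = d := by
  obtain ⟨-, he, ht⟩ := (memP1_iff hp hδ01).1 hext.1
  refine isBlock_of_isPacking (fun j => (hp j).le) (isPacking_early hp hα hδ01 hext hmin)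
    (isPacking_tardy hp hβ hδ01 hext hmin) (early_nonempty hp hβ hδ01 hext.1 hmin) hd
    (fun j hj => ?_) fun j hj => ?_
  · rw [ht.1 j (notMem_compl.2 hj), add_zero]
  · rw [he.1 j hj]
    ring
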